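/- Let f be λ-strongly convex and β-smooth, let S be a linear subspace containing w_t, and set w_{t+1} = w_t − η_t P_S g for some vector g, where η_t > 0. Then for any u ∈ S and any r ∈ ℝ, f(w_{t+1}) − r ≤ (1 − 2λη_t)(f(w_t) − r) + (η_t² β ‖P_S g‖²)/2 + η_t[2λ(f(u) − r) + ⟨P_S∇f(w_t) − P_S g, ∇f(w_t)⟩]. -/

import Mathlib

/-!
Smoothness along the step `-η P_S g` gives
`f(w_{t+1}) ≤ f(w_t) - η ⟪P_S ∇f(w_t), P_S g⟫ + η² β ‖P_S g‖² / 2`, the projection being harmless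
because `P_S g ∈ S`. Strong convexity restricted to `S` (where `∇f(w_t)` acts as `P_S ∇f(w_t)`),
minimised over the displacement, gives the Polyak–Łojasiewicz bound
`2λ (f(w_t) - f(u)) ≤ ‖P_S ∇f(w_t)‖²` for `u ∈ S`. Adding `η` times the latter to the former is
the claim.
-/

open scoped RealInnerProductSpace

section

variable {E : Type*} [NormedAddCommGroup E] [InnerProductSpace ℝ E]

theorem neg_norm_sq_le_two_mul_inner_add_sq_mul_norm_sq (c : ℝ) (x y : E) :
    -‖x‖ ^ 2 ≤ 2 * c * ⟪x, y⟫ + c ^ 2 * ‖y‖ ^ 2 := by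
  have h := norm_add_sq_real x (c • y)
  rw [real_inner_smul_right, norm_smul, mul_pow, Real.norm_eq_abs, sq_abs] at h
  linarith [sq_nonneg ‖x + c • y‖]

theorem apply_sub_smul_le_of_le_add_inner_add {f : E → ℝ} {β η : ℝ} {G w p : E}
    (h : f (w - η • p) ≤ f w + ⟪G, w - η • p - w⟫ + β / 2 * ‖w - η • p - w‖ ^ 2) :
    f (w - η • p) ≤ f w - η * ⟪G, p⟫ + η ^ 2 * β * ‖p‖ ^ 2 / 2 := by
  rw [sub_sub_cancel_left, inner_neg_right, real_inner_smul_right, norm_neg, norm_smul, mul_pow,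
    Real.norm_eq_abs, sq_abs] at h
  linarith

variable {K : Submodule ℝ E} [K.HasOrthogonalProjection]

theorem inner_orthogonalProjectionOnto_of_mem (x : E) {v : E} (hv : v ∈ K) :
    ⟪(K.orthogonalProjectionOnto x : E), v⟫ = ⟪x, v⟫ :=
  K.inner_orthogonalProjectionOnto_eq_of_mem_right ⟨v, hv⟩ x

theorem two_mul_mul_sub_le_norm_orthogonalProjectionOnto_sq {f : E → ℝ} {lam : ℝ} (hlam : 0 ≤ lam)
    {G w u : E} (hsc : f u ≥ f w + ⟪G, u - w⟫ + lam / 2 * ‖u - w‖ ^ 2) (hw : w ∈ K) (hu : u ∈ K) :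
    2 * lam * (f w - f u) ≤ ‖(K.orthogonalProjectionOnto G : E)‖ ^ 2 := by
  rw [← inner_orthogonalProjectionOnto_of_mem G (K.sub_mem hu hw)] at hsc
  linarith [neg_norm_sq_le_two_mul_inner_add_sq_mul_norm_sq lam
    (K.orthogonalProjectionOnto G : E) (u - w), mul_le_mul_of_nonneg_left hsc hlam]

end

theorem stmt_4 {d : ℕ} (lam β : ℝ) (hlam : 0 < lam)
    (f : EuclideanSpace ℝ (Fin d) → ℝ) (gradf : EuclideanSpace ℝ (Fin d) → EuclideanSpace ℝ (Fin d))
    (hsc : ∀ v w : EuclideanSpace ℝ (Fin d),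
      f v ≥ f w + ⟪gradf w, v - w⟫ + lam / 2 * ‖v - w‖ ^ 2)
    (hsm : ∀ v w : EuclideanSpace ℝ (Fin d),
      f v ≤ f w + ⟪gradf w, v - w⟫ + β / 2 * ‖v - w‖ ^ 2)
    (S : Submodule ℝ (EuclideanSpace ℝ (Fin d)))
    (wt g u : EuclideanSpace ℝ (Fin d)) (hwt : wt ∈ S) (hu : u ∈ S)
    (ηt : ℝ) (hη : 0 < ηt)
    (wt1 : EuclideanSpace ℝ (Fin d))
    (hstep : wt1 = wt - ηt • (S.orthogonalProjectionOnto g : EuclideanSpace ℝ (Fin d)))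
    (r : ℝ) :
    f wt1 - r ≤ (1 - 2 * lam * ηt) * (f wt - r)
      + ηt ^ 2 * β * ‖(S.orthogonalProjectionOnto g : EuclideanSpace ℝ (Fin d))‖ ^ 2 / 2
      + ηt * (2 * lam * (f u - r)
        + ⟪(S.orthogonalProjectionOnto (gradf wt) : EuclideanSpace ℝ (Fin d))
            - (S.orthogonalProjectionOnto g : EuclideanSpace ℝ (Fin d)), gradf wt⟫) := by
  subst hstep
  set p : EuclideanSpace ℝ (Fin d) := ↑(S.orthogonalProjectionOnto g)
  set q : EuclideanSpace ℝ (Fin d) := ↑(S.orthogonalProjectionOnto (gradf wt))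
  have hpS : p ∈ S := (S.orthogonalProjectionOnto g).2
  have hqS : q ∈ S := (S.orthogonalProjectionOnto (gradf wt)).2
  have descent : f (wt - ηt • p) ≤ f wt - ηt * ⟪q, p⟫ + ηt ^ 2 * β * ‖p‖ ^ 2 / 2 := by
    rw [inner_orthogonalProjectionOnto_of_mem _ hpS]
    exact apply_sub_smul_le_of_le_add_inner_add (hsm (wt - ηt • p) wt)
  have pl : 2 * lam * (f wt - f u) ≤ ‖q‖ ^ 2 :=
    two_mul_mul_sub_le_norm_orthogonalProjectionOnto_sq hlam.le (hsc u wt) hwt hu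
  have hqG : ⟪q - p, gradf wt⟫ = ‖q‖ ^ 2 - ⟪q, p⟫ := by
    rw [inner_sub_left, real_inner_comm, ← inner_orthogonalProjectionOnto_of_mem _ hqS,
      real_inner_self_eq_norm_sq, real_inner_comm, ← inner_orthogonalProjectionOnto_of_mem _ hpS]
  rw [hqG]
  linarith [mul_le_mul_of_nonneg_left pl hη.le]
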